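/- Let A be an (associative, unital) algebra over a commutative ring R, let a, b ∈ R, and let x, y ∈ A. Define recursively c₀ = y and c_{m+1} = x·c_m − (a^m·b)·(c_m·x). Then for every natural number n, c_n = ∑_{k=0}^{n} (−1)^k · b^k · a^{k(k−1)/2} · binom(n,k)_a · (x^{n−k} · y · x^k). -/
import Mathlib


/-- The Gaussian binomial coefficient `binom(n,k)_a`, defined recursively by
`binom(n,0)_a = 1`, `binom(n,k)_a = 0` for `k > n`, and
`binom(n,k)_a = binom(n−1,k−1)_a + a^k · binom(n−1,k)_a` for `1 ≤ k ≤ n`. -/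
def qBinom {R : Type*} [CommRing R] (q : R) : ℕ → ℕ → R
  | _, 0 => 1
  | 0, _ + 1 => 0
  | n + 1, k + 1 => qBinom q n k + q ^ (k + 1) * qBinom q n (k + 1)

lemma qBinom_succ_succ {R : Type*} [CommRing R] (q : R) (n k : ℕ) :
    qBinom q (n+1) (k+1) = qBinom q n k + q ^ (k + 1) * qBinom q n (k + 1) := rfl

lemma qBinom_zero {R : Type*} [CommRing R] (q : R) (n : ℕ) : qBinom q n 0 = 1 := by
  cases n <;> rfl

lemma qBinom_eq_zero {R : Type*} [CommRing R] (q : R) :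
    ∀ n k : ℕ, n < k → qBinom q n k = 0
  | 0, _+1, _ => rfl
  | n+1, k+1, h => by
    have h1 : n < k := by omega
    simp [qBinom, qBinom_eq_zero q n k h1, qBinom_eq_zero q n (k+1) (by omega)]

lemma qBinom_pascal' {R : Type*} [CommRing R] (q : R) :
    ∀ n k : ℕ, qBinom q (n+1) (k+1) = q^(n-k) * qBinom q n k + qBinom q n (k+1)
  | 0, 0 => by simp [qBinom]
  | 0, k+1 => by simp [qBinom, qBinom_eq_zero]
  | n+1, 0 => by
    have ih := qBinom_pascal' q n 0
    rw [qBinom_succ_succ q (n+1) 0]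
    conv_rhs => rw [qBinom_succ_succ q n 0]
    rw [ih]
    rw [show qBinom q (n+1) 0 = 1 from rfl, qBinom_zero]
    simp only [Nat.sub_zero, Nat.add_sub_cancel, zero_add]
    rw [pow_succ]
    ring
  | n+1, j+1 => by
    rw [qBinom_succ_succ q (n+1) (j+1)]
    conv_rhs => rw [qBinom_succ_succ q n j, qBinom_succ_succ q n (j+1)]
    rw [qBinom_pascal' q n j, qBinom_pascal' q n (j+1)]
    rw [show n+1-(j+1) = n-j by omega]
    rcases le_or_gt (j+1) n with h | h
    · have hq : q^(j+1+1) * q^(n-(j+1)) = q^(n-j) * q^(j+1) := by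
        rw [← pow_add, ← pow_add]; congr 1; omega
      linear_combination hq * qBinom q n (j+1)
    · have h0 : qBinom q n (j+1) = 0 := qBinom_eq_zero q n (j+1) h
      have h00 : qBinom q n (j+1+1) = 0 := qBinom_eq_zero q n (j+2) (by omega)
      rw [h0, h00]; ring

lemma tri_succ (k : ℕ) : (k+1)*k/2 = k*(k-1)/2 + k := by
  cases k with
  | zero => rfl
  | succ j =>
    have h : (j+1+1)*(j+1) = (j+1)*j + (j+1)*2 := by ring
    rw [h, Nat.add_mul_div_right _ _ (by norm_num : 0 < 2)]
    simp

lemma key_coef {R : Type*} [CommRing R] (a b : R) {n k : ℕ} (hk : k ≤ n) :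
    ((-1:R)^(k+1) * b^(k+1) * a^((k+1)*k/2) * qBinom a (n+1) (k+1))
      = ((-1:R)^(k+1) * b^(k+1) * a^((k+1)*k/2) * qBinom a n (k+1))
        - a^n*b*((-1:R)^k * b^k * a^(k*(k-1)/2) * qBinom a n k) := by
  rw [qBinom_pascal']
  have he : (k+1)*k/2 + (n-k) = n + k*(k-1)/2 := by
    rw [tri_succ]; omega
  have hpow : a^((k+1)*k/2) * a^(n-k) = a^n * a^(k*(k-1)/2) := by
    rw [← pow_add, ← pow_add, he]
  linear_combination ((-1:R)^(k+1) * b^(k+1) * qBinom a n k) * hpow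

/-- Explicit expansion of the iterated braided (q-)commutator: if `c₀ = y` and
`c_{m+1} = x·c_m − (a^m·b)·(c_m·x)`, then
`c_n = ∑_{k=0}^{n} (−1)^k · b^k · a^{k(k−1)/2} · binom(n,k)_a · x^{n−k} y x^k`. -/
theorem iterated_qCommutator_expansion {R A : Type*} [CommRing R] [Ring A] [Algebra R A]
    (a b : R) (x y : A) (c : ℕ → A) (hc0 : c 0 = y)
    (hc : ∀ m : ℕ, c (m + 1) = x * c m - (a ^ m * b) • (c m * x)) (n : ℕ) :
    c n = ∑ k ∈ Finset.range (n + 1),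
      ((-1 : R) ^ k * b ^ k * a ^ (k * (k - 1) / 2) * qBinom a n k) •
        (x ^ (n - k) * y * x ^ k) := by
  induction n with
  | zero => simp [hc0, qBinom]
  | succ n ih =>
    rw [hc n, ih]
    have h1 : x * ∑ k ∈ Finset.range (n + 1),
        ((-1 : R) ^ k * b ^ k * a ^ (k * (k - 1) / 2) * qBinom a n k) •
          (x ^ (n - k) * y * x ^ k)
        = ∑ k ∈ Finset.range (n + 1),
        ((-1 : R) ^ k * b ^ k * a ^ (k * (k - 1) / 2) * qBinom a n k) •
          (x ^ (n + 1 - k) * y * x ^ k) := by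
      rw [Finset.mul_sum]
      refine Finset.sum_congr rfl fun k hk => ?_
      have hkn : k ≤ n := by simpa [Nat.lt_succ_iff] using hk
      rw [mul_smul_comm, show n + 1 - k = (n - k) + 1 by omega, pow_succ']
      simp [mul_assoc]
    have h2 : (a ^ n * b) • ((∑ k ∈ Finset.range (n + 1),
        ((-1 : R) ^ k * b ^ k * a ^ (k * (k - 1) / 2) * qBinom a n k) •
          (x ^ (n - k) * y * x ^ k)) * x)
        = ∑ k ∈ Finset.range (n + 1),
        (a ^ n * b * ((-1 : R) ^ k * b ^ k * a ^ (k * (k - 1) / 2) * qBinom a n k)) •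
          (x ^ (n - k) * y * x ^ (k + 1)) := by
      rw [Finset.sum_mul, Finset.smul_sum]
      refine Finset.sum_congr rfl fun k hk => ?_
      rw [smul_mul_assoc, smul_smul, pow_succ]
      simp [mul_assoc]
    rw [h1, h2]
    -- extend the first sum to range (n+2)
    have h3 : ∑ k ∈ Finset.range (n + 1),
        ((-1 : R) ^ k * b ^ k * a ^ (k * (k - 1) / 2) * qBinom a n k) •
          (x ^ (n + 1 - k) * y * x ^ k)
        = ∑ k ∈ Finset.range (n + 2),
        ((-1 : R) ^ k * b ^ k * a ^ (k * (k - 1) / 2) * qBinom a n k) •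
          (x ^ (n + 1 - k) * y * x ^ k) := by
      rw [Finset.sum_range_succ (n := n + 1)]
      rw [qBinom_eq_zero a n (n+1) (by omega)]
      simp
    rw [h3]
    rw [Finset.sum_range_succ' _ (n + 1), Finset.sum_range_succ' _ (n + 1)]
    simp only [qBinom_zero]
    rw [add_sub_right_comm]
    congr 1
    rw [← Finset.sum_sub_distrib]
    refine Finset.sum_congr rfl fun k hk => ?_
    have hkn : k ≤ n := by simpa [Nat.lt_succ_iff] using hk
    rw [show n + 1 - (k + 1) = n - k by omega, show k + 1 - 1 = k from rfl, ← sub_smul]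
    congr 1
    exact (key_coef a b hkn).symm
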